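/- arXiv:1603.08077 — 2 statements merged into one kernel-verified Lean document; each statement's English description precedes it below -/
import Mathlib

section
/- Let $g \ge 2$ and $N \ge 1$ be integers, let $g' \ge 0$ and $k \ge 0$ be integers with $g' \ge 1$ or $k \ge 4$, and let $q_1, \dots, q_k$ be integers with each $q_i \ge 2$. If $2 - 2g = N\bigl(2 - 2g' - \sum_{i=1}^{k}(1 - 1/q_i)\bigr)$ (as an equality of rational numbers), then $N \le 12(g-1)$. -/
/-!
Write `χ = 2 - 2g' - ∑ (1 - 1/qᵢ)` for the orbifold Euler characteristic of the quotient, so that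
`2(g - 1) = -N χ` and `χ < 0`. Splitting `1 - 1/qᵢ = 1/2 + (1/2 - 1/qᵢ)`, each correction
`1/2 - 1/qᵢ` is `0` (for `qᵢ = 2`) or at least `1/6`. If all corrections vanish, `-χ = (4g' + k - 4)/2`
is a positive half-integer; otherwise `-χ ≥ (4g' + k - 4)/2 + 1/6 ≥ 1/6` because `4g' + k ≥ 4`.
Either way `-χ ≥ 1/6`, hence `N ≤ 6 · 2(g - 1)`.
-/

open Finset

theorem Finset.sum_eq_zero_or_le_sum {ι α : Type*} [AddCommMonoid α] [PartialOrder α]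
    [IsOrderedAddMonoid α] {s : Finset ι} {f : ι → α} {ε : α} (hε : 0 ≤ ε)
    (hf : ∀ i ∈ s, f i = 0 ∨ ε ≤ f i) : ∑ i ∈ s, f i = 0 ∨ ε ≤ ∑ i ∈ s, f i := by
  by_cases hzero : ∀ i ∈ s, f i = 0
  · exact Or.inl (sum_eq_zero hzero)
  · push Not at hzero
    obtain ⟨i, hi, hfi⟩ := hzero
    have hnonneg : ∀ j ∈ s, 0 ≤ f j := fun j hj =>
      (hf j hj).elim (fun h => h.ge) (fun h => hε.trans h)
    exact Or.inr <| ((hf i hi).resolve_left hfi).trans (single_le_sum hnonneg hi)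

lemma half_sub_inv_eq_zero_or_le {q : ℤ} (hq : 2 ≤ q) :
    (1 / 2 - 1 / q : ℚ) = 0 ∨ 1 / 6 ≤ (1 / 2 - 1 / q : ℚ) := by
  rcases hq.eq_or_lt with rfl | hq3
  · left; norm_num
  · right
    have hq3' : (3 : ℚ) ≤ q := by exact_mod_cast hq3
    have : 1 / (q : ℚ) ≤ 1 / 3 := one_div_le_one_div_of_le (by norm_num) hq3'
    linarith

def orbifoldEulerChar {ι : Type*} [Fintype ι] (g' : ℕ) (q : ι → ℤ) : ℚ :=
  2 - 2 * g' - ∑ i, (1 - 1 / (q i : ℚ))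

lemma orbifoldEulerChar_eq {ι : Type*} [Fintype ι] (g' : ℕ) (q : ι → ℤ) :
    orbifoldEulerChar g' q =
      -((4 * g' + Fintype.card ι : ℕ) - 4) / 2 - ∑ i, (1 / 2 - 1 / (q i : ℚ)) := by
  have hsplit : ∑ i, (1 - 1 / (q i : ℚ)) = Fintype.card ι / 2 + ∑ i, (1 / 2 - 1 / (q i : ℚ)) := by
    simp only [sum_sub_distrib, sum_const, card_univ, nsmul_eq_mul]
    ring
  rw [orbifoldEulerChar, hsplit]
  push_cast
  ring

lemma orbifoldEulerChar_le_neg_one_sixth {k : ℕ} (g' : ℕ) (hg'k : 1 ≤ g' ∨ 4 ≤ k)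
    (q : Fin k → ℤ) (hq : ∀ i, 2 ≤ q i) (hneg : orbifoldEulerChar g' q < 0) :
    orbifoldEulerChar g' q ≤ -1 / 6 := by
  rw [orbifoldEulerChar_eq, Fintype.card_fin] at hneg ⊢
  set m := 4 * g' + k
  rcases sum_eq_zero_or_le_sum (by norm_num) (fun i _ => half_sub_inv_eq_zero_or_le (hq i)) with
    hzero | hsixth
  · rw [hzero] at hneg ⊢
    have hm : 4 < m := by exact_mod_cast (show (4 : ℚ) < m by linarith)
    have hm' : (5 : ℚ) ≤ m := by exact_mod_cast hm
    linarith
  · have hm : (4 : ℚ) ≤ m := by exact_mod_cast (show 4 ≤ m by omega)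
    linarith

/-- Riemann–Hurwitz bound: if `2 - 2g = N (2 - 2g' - ∑ (1 - 1/qᵢ))` with `g ≥ 2`,
`N ≥ 1`, each `qᵢ ≥ 2`, and `g' ≥ 1` or `k ≥ 4`, then `N ≤ 12(g-1)`. -/
theorem riemann_hurwitz_order_bound
    (g N : ℤ) (hg : 2 ≤ g) (hN : 1 ≤ N)
    (g' k : ℕ) (hg'k : 1 ≤ g' ∨ 4 ≤ k)
    (q : Fin k → ℤ) (hq : ∀ i, 2 ≤ q i)
    (hRH : (2 - 2 * g : ℚ) =
      N * (2 - 2 * g' - ∑ i, (1 - 1 / (q i : ℚ)))) :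
    N ≤ 12 * (g - 1) := by
  change (2 - 2 * g : ℚ) = N * orbifoldEulerChar g' q at hRH
  have hgQ : (2 : ℚ) ≤ g := by exact_mod_cast hg
  have hNQ : (1 : ℚ) ≤ N := by exact_mod_cast hN
  have hneg : orbifoldEulerChar g' q < 0 := by
    by_contra! hnonneg
    nlinarith
  have hχ := orbifoldEulerChar_le_neg_one_sixth g' hg'k q hq hneg
  have : (N : ℚ) ≤ 12 * (g - 1) := by nlinarith
  exact_mod_cast this
end

section
/- Let $g' \ge 0$ and $k \ge 0$ be integers with $g' \ge 1$ or $k \ge 4$, and let $q_1, \dots, q_k$ be integers with each $q_i \ge 2$. Set $D = 2g' - 2 + \sum_{i=1}^{k}(1 - 1/q_i)$ (a rational number). If $D > 0$, then $D \ge 1/6$. -/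
/-!
Every summand `1 - 1/qᵢ` is at least `1/2`. If all `qᵢ = 2`, then `D = 2g' - 2 + k/2` is a
positive half-integer, hence at least `1/2`. Otherwise some summand is at least `2/3`, so
`D ≥ (2g' - 2 + k/2) + 1/6`, and `2g' - 2 + k/2 ≥ 0` precisely because `g' ≥ 1` or `k ≥ 4`.
-/

section

variable {ι K : Type*} [Field K] [LinearOrder K] [IsStrictOrderedRing K]

theorem one_sub_one_div_le_one_sub_one_div {a b : K} (ha : 0 < a) (hab : a ≤ b) :
    1 - 1 / a ≤ 1 - 1 / b :=
  sub_le_sub_left (one_div_le_one_div_of_le ha hab) 1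

theorem card_div_two_add_le_sum_one_sub_one_div [Fintype ι] {q : ι → K} (hq : ∀ i, 2 ≤ q i)
    (j : ι) : Fintype.card ι / 2 + (1 / 2 - 1 / q j) ≤ ∑ i, (1 - 1 / q i) := by
  have hexcess : ∀ i, 0 ≤ 1 / 2 - 1 / q i := fun i => by
    have := one_sub_one_div_le_one_sub_one_div two_pos (hq i)
    linarith
  calc (Fintype.card ι : K) / 2 + (1 / 2 - 1 / q j)
      ≤ Fintype.card ι / 2 + ∑ i, (1 / 2 - 1 / q i) := by
        gcongr
        exact Finset.single_le_sum (fun i _ => hexcess i) (Finset.mem_univ j)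
    _ = ∑ i, (1 - 1 / q i) := by
        rw [Finset.sum_sub_distrib, Finset.sum_sub_distrib, Finset.sum_const, Finset.sum_const,
          Finset.card_univ, nsmul_eq_mul, nsmul_eq_mul]
        ring

end

theorem one_half_le_of_pos_two_mul_sub_two_add_half (g k : ℕ)
    (h : 0 < 2 * (g : ℚ) - 2 + k / 2) : 1 / 2 ≤ 2 * (g : ℚ) - 2 + k / 2 := by
  have hpos : (0 : ℤ) < 4 * g - 4 + k := by
    have : (0 : ℚ) < 4 * g - 4 + k := by linarith
    exact_mod_cast this
  have : (1 : ℚ) ≤ 4 * g - 4 + k := by exact_mod_cast hpos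
  linarith

/-- The key elementary inequality: if `g' ≥ 1` or `k ≥ 4`, each `qᵢ ≥ 2`, and
`D = 2g' - 2 + ∑ (1 - 1/qᵢ) > 0`, then `D ≥ 1/6`. -/
theorem orbifold_euler_char_gap
    (g' k : ℕ) (hg'k : 1 ≤ g' ∨ 4 ≤ k)
    (q : Fin k → ℤ) (hq : ∀ i, 2 ≤ q i)
    (hD : 0 < (2 * g' - 2 + ∑ i, (1 - 1 / (q i : ℚ)))) :
    1 / 6 ≤ (2 * g' - 2 + ∑ i, (1 - 1 / (q i : ℚ))) := by
  by_cases hall : ∀ i, q i = 2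
  · have hsum : ∑ i, (1 - 1 / (q i : ℚ)) = k / 2 := by
      simp only [hall, Int.cast_ofNat, Finset.sum_const, Finset.card_univ, Fintype.card_fin,
        nsmul_eq_mul]
      ring
    rw [hsum] at hD ⊢
    linarith [one_half_le_of_pos_two_mul_sub_two_add_half g' k hD]
  · obtain ⟨j, hj⟩ := not_forall.mp hall
    have hj3 : (3 : ℚ) ≤ q j := by exact_mod_cast lt_of_le_of_ne (hq j) (Ne.symm hj)
    have hexcess : 1 / 6 ≤ 1 / 2 - 1 / (q j : ℚ) := by
      linarith [one_sub_one_div_le_one_sub_one_div (by norm_num) hj3]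
    have hbase : 0 ≤ 2 * (g' : ℚ) - 2 + k / 2 := by
      rcases hg'k with hg | hk
      · have : (1 : ℚ) ≤ g' := by exact_mod_cast hg
        linarith [(k.cast_nonneg : (0 : ℚ) ≤ k)]
      · have : (4 : ℚ) ≤ k := by exact_mod_cast hk
        linarith
    have hqQ : ∀ i, (2 : ℚ) ≤ q i := fun i => by exact_mod_cast hq i
    have hsum := card_div_two_add_le_sum_one_sub_one_div hqQ j
    rw [Fintype.card_fin] at hsum
    linarith
end
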